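/- For a powerset-enriched monad T, a T-monoid (X, α), and a T-algebra (V, q), the set [X,V] of T-monoid homomorphisms f : (X,α) → (V, q*) is closed under arbitrary pointwise infima in V^X: if S ⊆ [X,V] then the pointwise infimum ⋀S is again a T-monoid homomorphism. -/

import Mathlib

universe u

/-- A powerset-enriched monad on `Set`: a monad `(T, η, μ)` together with a monad
morphism `τ` from the powerset monad. -/
structure PSEM : Type (u + 1) where
  T : Type u → Type u
  map : ∀ {X Y : Type u}, (X → Y) → T X → T Y
  η : ∀ {X : Type u}, X → T X
  μ : ∀ {X : Type u}, T (T X) → T X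
  τ : ∀ {X : Type u}, Set X → T X
  map_id : ∀ {X : Type u} (t : T X), map id t = t
  map_comp : ∀ {X Y Z : Type u} (f : X → Y) (g : Y → Z) (t : T X),
    map (g ∘ f) t = map g (map f t)
  η_nat : ∀ {X Y : Type u} (f : X → Y) (x : X), map f (η x) = η (f x)
  μ_nat : ∀ {X Y : Type u} (f : X → Y) (t : T (T X)),
    map f (μ t) = μ (map (map f) t)
  unit_left : ∀ {X : Type u} (t : T X), μ (η t) = t
  unit_right : ∀ {X : Type u} (t : T X), μ (map η t) = t
  assoc : ∀ {X : Type u} (t : T (T (T X))), μ (μ t) = μ (map μ t)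
  τ_nat : ∀ {X Y : Type u} (f : X → Y) (A : Set X), map f (τ A) = τ (f '' A)
  τ_η : ∀ {X : Type u} (x : X), τ ({x} : Set X) = η x
  τ_μ : ∀ {X : Type u} (𝒮 : Set (Set X)), τ (⋃₀ 𝒮) = μ (map τ (τ 𝒮))

namespace PSEM

variable (M : PSEM.{u})

/-- The supremum map `μ_X ∘ τ_{TX} : P(TX) → TX` on `T X`. -/
def ksup {X : Type u} (S : Set (M.T X)) : M.T X := M.μ (M.τ S)

/-- The order induced on `T X` by the sup-semilattice structure `μ_X ∘ τ_{TX}`. -/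
def kle {X : Type u} (t t' : M.T X) : Prop := M.ksup {t, t'} = t'

/-- The order induced on a `T`-algebra `(V, q)` by the sup-semilattice structure
`q ∘ τ_V`. -/
def algLe {V : Type u} (q : M.T V → V) (v w : V) : Prop := q (M.τ {v, w}) = w

/-- Infima in a `T`-algebra `(V, q)`, computed as the supremum of the lower bounds. -/
def algInf {V : Type u} (q : M.T V → V) (S : Set V) : V :=
  q (M.τ {v | ∀ w ∈ S, M.algLe q v w})

end PSEM

/-!
With `q ∘ τ` as supremum, the algebra laws make `(V, q)` a complete lattice, and enrichment
makes `f ↦ q ∘ Tf ∘ α` monotone. If `g` is the pointwise infimum of `S`, then `g ≤ f` for every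
`f ∈ S`, so `q ∘ Tg ∘ α ≤ q ∘ Tf ∘ α ≤ f`; hence `q ∘ Tg ∘ α` is a lower bound of `S` and lies
below `g`.
-/

namespace PSEM

variable {M : PSEM.{u}}

def KleisliMonotone (M : PSEM.{u}) : Prop :=
  ∀ {X Y : Type u} (f g : X → M.T Y),
    (∀ x, M.kle (f x) (g x)) → ∀ t : M.T X, M.kle (M.μ (M.map f t)) (M.μ (M.map g t))

structure IsAlgebra (M : PSEM.{u}) {V : Type u} (q : M.T V → V) : Prop where
  unit : ∀ v : V, q (M.η v) = v
  mult : ∀ t : M.T (M.T V), q (M.μ t) = q (M.map q t)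

theorem kle_τ_of_subset {Y : Type u} {A B : Set Y} (h : A ⊆ B) : M.kle (M.τ A) (M.τ B) := by
  unfold kle ksup
  rw [← Set.image_pair, ← M.τ_nat, ← M.τ_μ, Set.sUnion_pair, Set.union_eq_self_of_subset_left h]

namespace IsAlgebra

variable {V : Type u} {q : M.T V → V}

theorem q_μ_map (hq : M.IsAlgebra q) {X : Type u} (φ : X → M.T V) (t : M.T X) :
    q (M.μ (M.map φ t)) = q (M.map (q ∘ φ) t) := by
  rw [hq.mult, M.map_comp]

theorem sup_singleton (hq : M.IsAlgebra q) (v : V) : q (M.τ {v}) = v := by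
  rw [M.τ_η, hq.unit]

theorem sup_sUnion (hq : M.IsAlgebra q) (𝒮 : Set (Set V)) :
    q (M.τ (⋃₀ 𝒮)) = q (M.τ ((fun s => q (M.τ s)) '' 𝒮)) := by
  rw [M.τ_μ, hq.mult, ← M.map_comp, M.τ_nat]
  rfl

theorem sup_union (hq : M.IsAlgebra q) (A B : Set V) :
    q (M.τ (A ∪ B)) = q (M.τ {q (M.τ A), q (M.τ B)}) := by
  rw [← Set.sUnion_pair, hq.sup_sUnion, Set.image_pair]

theorem algLe_refl (hq : M.IsAlgebra q) (v : V) : M.algLe q v v := by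
  rw [algLe, Set.pair_eq_singleton, hq.sup_singleton]

theorem algLe_trans (hq : M.IsAlgebra q) {u v w : V} (huv : M.algLe q u v)
    (hvw : M.algLe q v w) : M.algLe q u w :=
  calc q (M.τ {u, w})
      = q (M.τ {q (M.τ {u}), q (M.τ {v, w})}) := by rw [hq.sup_singleton, hvw]
    _ = q (M.τ ({u} ∪ {v, w})) := (hq.sup_union _ _).symm
    _ = q (M.τ ({u, v} ∪ {w})) := by rw [Set.singleton_union, Set.union_singleton,
          Set.insert_comm w u, Set.pair_comm w v]
    _ = q (M.τ {q (M.τ {u, v}), q (M.τ {w})}) := hq.sup_union _ _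
    _ = w := by rw [huv, hq.sup_singleton, hvw]

theorem le_sup (hq : M.IsAlgebra q) {s : Set V} {v : V} (hv : v ∈ s) :
    M.algLe q v (q (M.τ s)) := by
  rw [algLe, ← hq.sup_singleton v, ← hq.sup_union, Set.singleton_union, Set.insert_eq_of_mem hv]

theorem sup_le (hq : M.IsAlgebra q) {s : Set V} {w : V} (h : ∀ v ∈ s, M.algLe q v w) :
    M.algLe q (q (M.τ s)) w := by
  have hcover : insert w s = ⋃₀ ((fun v => ({v, w} : Set V)) '' insert w s) := by
    ext y
    simp only [Set.sUnion_image, Set.mem_iUnion, Set.mem_insert_iff, Set.mem_singleton_iff,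
      exists_prop]
    exact ⟨fun hy => ⟨y, hy, Or.inl rfl⟩, by rintro ⟨v, hv, rfl | rfl⟩ <;> tauto⟩
  have hsup : q (M.τ (insert w s)) = w := by
    rw [hcover, hq.sup_sUnion, Set.image_image,
      Set.image_congr (g := fun _ => w) fun v hv => hv.elim (· ▸ hq.algLe_refl w) (h v),
      (Set.insert_nonempty w s).image_const, hq.sup_singleton]
  rw [algLe, ← hq.sup_singleton w, ← hq.sup_union, hq.sup_singleton, Set.union_singleton, hsup]

theorem algInf_le (hq : M.IsAlgebra q) {S : Set V} {w : V} (hw : w ∈ S) :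
    M.algLe q (M.algInf q S) w :=
  hq.sup_le fun _ hv => hv w hw

theorem le_algInf (hq : M.IsAlgebra q) {S : Set V} {v : V} (h : ∀ w ∈ S, M.algLe q v w) :
    M.algLe q v (M.algInf q S) :=
  hq.le_sup h

theorem algLe_of_kle (hq : M.IsAlgebra q) {t t' : M.T V} (h : M.kle t t') :
    M.algLe q (q t) (q t') := by
  unfold kle ksup at h
  rw [algLe, ← Set.image_pair, ← M.τ_nat, ← hq.mult, h]

theorem map_mono (hq : M.IsAlgebra q) (enr : M.KleisliMonotone) {X : Type u} {g f : X → V}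
    (h : ∀ x, M.algLe q (g x) (f x)) (t : M.T X) :
    M.algLe q (q (M.map g t)) (q (M.map f t)) := by
  -- Lift `g ≤ f` to `T V` as `τ {g x} ≤ τ {g x, f x}`, whose images under `q` are `g x` and `f x`.
  have hkle := enr (fun x => M.τ {g x}) (fun x => M.τ {g x, f x})
    (fun x => kle_τ_of_subset (Set.singleton_subset_iff.2 (Set.mem_insert _ _))) t
  have hg : q ∘ (fun x => M.τ {g x}) = g := funext fun x => hq.sup_singleton (g x)
  have hf : q ∘ (fun x => M.τ {g x, f x}) = f := funext h
  simpa only [hq.q_μ_map, hg, hf] using hq.algLe_of_kle hkle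

end IsAlgebra

end PSEM

theorem homset_closed_under_infima_general (M : PSEM.{u})
    (enr : ∀ {X Y : Type u} (f g : X → M.T Y),
      (∀ x, M.kle (f x) (g x)) →
      ∀ t : M.T X, M.kle (M.μ (M.map f t)) (M.μ (M.map g t)))
    {X V : Type u}
    (q : M.T V → V)
    (hq1 : ∀ v : V, q (M.η v) = v)
    (hq2 : ∀ t : M.T (M.T V), q (M.μ t) = q (M.map q t))
    (α : X → M.T X)
    (S : Set (X → V))
    (hS : ∀ f ∈ S, ∀ x : X, M.algLe q (q (M.map f (α x))) (f x)) :
    ∀ x : X,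
      M.algLe q
        (q (M.map (fun y : X => M.algInf q ((fun f : X → V => f y) '' S)) (α x)))
        (M.algInf q ((fun f : X → V => f x) '' S)) := by
  intro x
  have hq : M.IsAlgebra q := ⟨hq1, hq2⟩
  apply hq.le_algInf
  rintro _ ⟨f, hf, rfl⟩
  have hinf_le : ∀ y, M.algLe q (M.algInf q ((fun f : X → V => f y) '' S)) (f y) :=
    fun y => hq.algInf_le ⟨f, hf, rfl⟩
  exact hq.algLe_trans (hq.map_mono enr hinf_le (α x)) (hS f hf x)

/-- For a powerset-enriched monad `T`, a `T`-monoid `(X, α)` and a `T`-algebra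
`(V, q)`, the set `[X,V]` of `T`-monoid homomorphisms `f : (X,α) → (V, q*)`
(i.e. maps with `q ∘ Tf ∘ α ≤ f`) is closed under arbitrary pointwise infima
in `V^X`: the pointwise infimum of any `S ⊆ [X,V]` is again a homomorphism. -/
theorem homset_closed_under_infima (M : PSEM.{u})
    (enr : ∀ {X Y : Type u} (f g : X → M.T Y),
      (∀ x, M.kle (f x) (g x)) →
      ∀ t : M.T X, M.kle (M.μ (M.map f t)) (M.μ (M.map g t)))
    {X V : Type u}
    (q : M.T V → V)
    (hq1 : ∀ v : V, q (M.η v) = v)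
    (hq2 : ∀ t : M.T (M.T V), q (M.μ t) = q (M.map q t))
    (α : X → M.T X)
    (hrefl : ∀ x : X, M.kle (M.η x) (α x))
    (htrans : ∀ x : X, M.kle (M.μ (M.map α (α x))) (α x))
    (S : Set (X → V))
    (hS : ∀ f ∈ S, ∀ x : X, M.algLe q (q (M.map f (α x))) (f x)) :
    ∀ x : X,
      M.algLe q
        (q (M.map (fun y : X => M.algInf q ((fun f : X → V => f y) '' S)) (α x)))
        (M.algInf q ((fun f : X → V => f x) '' S)) :=
  homset_closed_under_infima_general M enr q hq1 hq2 α S hS
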